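/- Let k ≥ 2 and n > 2k. Let W be a 2k-dimensional left vector space over a division ring, X = {x_1,…,x_n} a (2k)-independent subset of W, and Y = {y*_1,…,y*_n} a (2k)-independent subset of the dual space W*; let U_i denote the annihilator of y*_i in W. Assume that every U_i is spanned by a subset of X and that every line ⟨x_i⟩ is the intersection of some of the subspaces U_j. Then |J_k(X) ∩ J*_k(Y)| < a(n,k) = C(n−2,k−2) + C(n−1,k). -/

import Mathlib

open Submodule Set Function Module

/-- A family of vectors is `m`-independent if every `m`-element subfamily is
linearly independent. -/
def MIndep (R : Type*) {W : Type*} [DivisionRing R] [AddCommGroup W] [Module R W]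
    {n : ℕ} (m : ℕ) (x : Fin n → W) : Prop :=
  ∀ A : Finset (Fin n), A.card = m → LinearIndependent R (fun i : A => x (i : Fin n))

/-- `J_k(X)`: the set of all `k`-dimensional subspaces spanned by `k`-element subsets of
the family `x`. -/
def JkSet (R : Type*) {W : Type*} [DivisionRing R] [AddCommGroup W] [Module R W]
    {n : ℕ} (k : ℕ) (x : Fin n → W) : Set (Submodule R W) :=
  {P | ∃ A : Finset (Fin n), A.card = k ∧ P = Submodule.span R (x '' ↑A)}

/-- The special subset `J(+i,+j) ∪ J(-i)` of `J = J_k(X)`: all members of `J` which either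
contain both `x i` and `x j`, or do not contain `x i`. -/
def SpecialSubset (R : Type*) {W : Type*} [DivisionRing R] [AddCommGroup W] [Module R W]
    {n : ℕ} (k : ℕ) (x : Fin n → W) (i j : Fin n) : Set (Submodule R W) :=
  {P | P ∈ JkSet R k x ∧ ((x i ∈ P ∧ x j ∈ P) ∨ x i ∉ P)}

/-- A subset `Z` of `J = J_k(X)` is inexact if there is a `(2k)`-independent `n`-element
family `y` with `J_k(Y) ≠ J` and `Z ⊆ J_k(Y)`. -/
def InexactIn (R : Type*) {W : Type*} [DivisionRing R] [AddCommGroup W] [Module R W]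
    (n k : ℕ) (J : Set (Submodule R W)) (Z : Set (Submodule R W)) : Prop :=
  ∃ y : Fin n → W, Function.Injective y ∧ MIndep R (2 * k) y ∧
    JkSet R k y ≠ J ∧ Z ⊆ JkSet R k y

/-- `J*_k(Y)`: the set of annihilators in `W` of the elements of `J_k(Y)` for a family `y`
of linear functionals; equivalently, the intersections of `k` distinct kernels `U_j`. -/
def JStarSet (K : Type*) {W : Type*} [DivisionRing K] [AddCommGroup W] [Module K W]
    {n : ℕ} (k : ℕ) (y : Fin n → (W →ₗ[K] K)) : Set (Submodule K W) :=
  {P | ∃ A : Finset (Fin n), A.card = k ∧ P = ⨅ i ∈ A, LinearMap.ker (y i)}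


/-!
Every `P ∈ J_k(X) ∩ J*_k(Y)` is `⋂_{j ∈ B} U_j` for a `k`-set `B` of indices, determined by
`P` since any `2k` of the `y_j` are independent, and `P` is spanned by exactly `k` of the `x_i`.
These `x_i` lie in each `U_j` with `j ∈ B`, and every hyperplane `U_j` contains exactly `2k - 1`
of the `x_i`; so every index `j` lies in at most `C(2k-1, k)` of the sets `B`, and double counting
the incidences `j ∈ B` gives `k · |J_k(X) ∩ J*_k(Y)| ≤ n · C(2k-1, k) < k · a(n, k)`.

The last inequality fails only for `(k, n) = (2, 5)`. There every `x_i` also lies in exactly three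
of the five planes `U_j`, so for fixed `j` the numbers of points shared by `U_j` and `U_{j'}`,
`j' ≠ j`, are four positive integers with sum `3 · 2`; at most two of them reach `2`, hence each
`j` lies in at most two sets `B` and `|J_2(X) ∩ J*_2(Y)| ≤ 5 < 7`.
-/

open Finset

section MIndep

variable {R V : Type*} [DivisionRing R] [AddCommGroup V] [Module R V] {n m : ℕ} {x : Fin n → V}

theorem MIndep.linearIndepOn (hx : MIndep R m x) (hmn : m ≤ n) {A : Finset (Fin n)}
    (hA : #A ≤ m) : LinearIndepOn R x (A : Set (Fin n)) := by
  obtain ⟨B, hAB, -, hB⟩ := exists_subsuperset_card_eq (subset_univ A) hA (by simpa using hmn)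
  exact LinearIndepOn.mono (hx B hB) (coe_subset.2 hAB)

theorem MIndep.ne_zero (hx : MIndep R m x) (hm : 0 < m) (hmn : m ≤ n) (i : Fin n) : x i ≠ 0 :=
  (hx.linearIndepOn hmn (A := {i}) ((Finset.card_singleton i).trans_le hm)).ne_zero (by simp)

theorem MIndep.finrank_span_image (hx : MIndep R m x) (hmn : m ≤ n) {A : Finset (Fin n)}
    (hA : #A ≤ m) : finrank R (span R (x '' A)) = #A := by
  rw [Set.image_eq_range, finrank_span_eq_card (hx.linearIndepOn hmn hA)]
  simp

open Classical in
noncomputable def indicesIn (x : Fin n → V) (p : Submodule R V) : Finset (Fin n) :=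
  {i | x i ∈ p}

@[simp]
theorem mem_indicesIn {p : Submodule R V} {i : Fin n} : i ∈ indicesIn x p ↔ x i ∈ p := by
  simp [indicesIn]

theorem indicesIn_mono {p q : Submodule R V} (h : p ≤ q) : indicesIn x p ⊆ indicesIn x q :=
  fun _ hi => mem_indicesIn.2 (h (mem_indicesIn.1 hi))

theorem subset_indicesIn_span (A : Finset (Fin n)) : A ⊆ indicesIn x (span R (x '' A)) :=
  fun i hi => mem_indicesIn.2 (subset_span ⟨i, hi, rfl⟩)

variable [FiniteDimensional R V]

theorem MIndep.card_indicesIn_le (hx : MIndep R m x) (hmn : m ≤ n) {p : Submodule R V}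
    (hp : finrank R p < m) : #(indicesIn x p) ≤ finrank R p := by
  by_contra! h
  obtain ⟨B, hB, hBcard⟩ := exists_subset_card_eq (Nat.succ_le_of_lt h)
  have hle : span R (x '' B) ≤ p := span_le.2 <| by
    rintro _ ⟨i, hi, rfl⟩
    exact mem_indicesIn.1 (hB hi)
  have := Submodule.finrank_mono hle
  rw [hx.finrank_span_image hmn (by omega), hBcard] at this
  omega

theorem MIndep.card_eq_finrank_span (hx : MIndep R m x) (hmn : m ≤ n) {A : Finset (Fin n)}
    (hA : finrank R (span R (x '' A)) < m) : #A = finrank R (span R (x '' A)) :=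
  hx.finrank_span_image hmn ((Finset.card_le_card (subset_indicesIn_span A)).trans
    ((hx.card_indicesIn_le hmn hA).trans hA.le)) |>.symm

theorem MIndep.indicesIn_span (hx : MIndep R m x) (hmn : m ≤ n) {A : Finset (Fin n)}
    (hA : finrank R (span R (x '' A)) < m) : indicesIn x (span R (x '' A)) = A :=
  (eq_of_subset_of_card_le (subset_indicesIn_span A)
    ((hx.card_indicesIn_le hmn hA).trans (hx.card_eq_finrank_span hmn hA).ge)).symm

end MIndep

section Dual

variable {K W ι : Type*} [DivisionRing K] [AddCommGroup W] [Module K W] [FiniteDimensional K W]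

theorem finrank_iInf_ker_add_card {y : ι → W →ₗ[K] K} {S : Finset ι}
    (hS : LinearIndepOn Kᵐᵒᵖ y (S : Set ι)) :
    finrank K (⨅ j ∈ S, LinearMap.ker (y j) : Submodule K W) + #S = finrank K W := by
  classical
  let Φ : W →ₗ[K] (S → K) := LinearMap.pi fun j : S => y j
  have hker : LinearMap.ker Φ = ⨅ j ∈ S, LinearMap.ker (y j) := by
    rw [LinearMap.ker_pi, iInf_subtype]
  -- A nonzero functional `g` on `S → K` vanishing on the range of `Φ` would give the relation
  -- `∑ j, y j * g (single j 1) = 0`, nontrivial in the right `K`-space of functionals.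
  have hrange : LinearMap.range Φ = ⊤ := by
    by_contra hne
    obtain ⟨g, hg0, hg⟩ :=
      (LinearMap.range Φ).exists_le_ker_of_lt_top (lt_top_iff_ne_top.2 hne)
    let c : S → K := fun j => g (Pi.single j 1)
    have hdep : ∑ j : S, MulOpposite.op (c j) • y j = 0 := by
      ext w
      have : g (Φ w) = 0 := hg ⟨w, rfl⟩
      have hsingle : ∀ j : S, (fun j' => if j = j' then (1 : K) else 0) = Pi.single j 1 :=
        fun j => funext fun j' => by simp [Pi.single_apply, eq_comm]
      rw [LinearMap.pi_apply_eq_sum_univ] at this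
      simp only [hsingle] at this
      simpa [Φ, c, MulOpposite.smul_eq_mul_unop, Pi.single_apply, eq_comm] using this
    have hc : ∀ j, c j = 0 := fun j =>
      MulOpposite.op_injective (Fintype.linearIndependent_iff.1 hS _ hdep j)
    exact hg0 (LinearMap.pi_ext' fun j => LinearMap.ext_ring (by simpa using hc j))
  have := LinearMap.finrank_range_add_finrank_ker Φ
  rwa [hrange, finrank_top, Module.finrank_fintype_fun_eq_card, Fintype.card_coe, hker,
    add_comm] at this

end Dual

section Functionals

variable {K W : Type*} [DivisionRing K] [AddCommGroup W] [Module K W] [FiniteDimensional K W]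
  {n m : ℕ} {y : Fin n → W →ₗ[K] K}

theorem MIndep.finrank_iInf_ker_add_card (hy : MIndep Kᵐᵒᵖ m y) (hmn : m ≤ n)
    {S : Finset (Fin n)} (hS : #S ≤ m) :
    finrank K (⨅ j ∈ S, LinearMap.ker (y j) : Submodule K W) + #S = finrank K W :=
  _root_.finrank_iInf_ker_add_card (hy.linearIndepOn hmn hS)

theorem MIndep.card_lt_of_forall_apply_eq_zero (hy : MIndep Kᵐᵒᵖ m y) (hmn : m ≤ n)
    (hW : finrank K W = m) {v : W} (hv : v ≠ 0) {S : Finset (Fin n)}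
    (hS : ∀ j ∈ S, y j v = 0) :
    #S < m := by
  by_contra! h
  obtain ⟨T, hTS, hT⟩ := exists_subset_card_eq h
  have hdim := hy.finrank_iInf_ker_add_card hmn hT.le
  rw [hT, hW, Nat.add_eq_right, Submodule.finrank_eq_zero] at hdim
  have hvT : v ∈ (⨅ j ∈ T, LinearMap.ker (y j) : Submodule K W) := by
    simpa using fun j hj => hS j (hTS hj)
  exact hv (by simpa [hdim] using hvT)

theorem MIndep.eq_of_iInf_ker_eq (hy : MIndep Kᵐᵒᵖ m y) (hmn : m ≤ n)
    {B B' : Finset (Fin n)}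
    (hcard : #B = #B') (hm : #B + #B' ≤ m)
    (h : (⨅ j ∈ B, LinearMap.ker (y j) : Submodule K W) = ⨅ j ∈ B', LinearMap.ker (y j)) :
    B = B' := by
  have hunion : (⨅ j ∈ B ∪ B', LinearMap.ker (y j) : Submodule K W) =
      ⨅ j ∈ B, LinearMap.ker (y j) := by
    rw [Finset.iInf_union, h, inf_idem]
  have hdimB := hy.finrank_iInf_ker_add_card hmn (le_self_add.trans hm)
  have hdimU := hy.finrank_iInf_ker_add_card hmn ((card_union_le B B').trans hm)
  rw [hunion, ← hdimB, Nat.add_left_cancel_iff] at hdimU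
  exact (eq_of_subset_of_card_le subset_union_left hdimU.le).trans
    (eq_of_subset_of_card_le subset_union_right (hdimU.trans hcard).le).symm

end Functionals

section Arithmetic

theorem mul_choose_two_mul_sub_one_lt_succ {k n : ℕ} (hk : 1 ≤ k) (hn : 2 * k ≤ n)
    (h : n * (2 * k - 1).choose k < k * ((n - 2).choose (k - 2) + (n - 1).choose k)) :
    (n + 1) * (2 * k - 1).choose k < k * ((n + 1 - 2).choose (k - 2) + (n + 1 - 1).choose k) := by
  have hpascal : n.choose k = (n - 1).choose (k - 1) + (n - 1).choose k := by
    have := Nat.choose_succ_succ' (n - 1) (k - 1)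
    rwa [Nat.sub_add_cancel (by omega), Nat.sub_add_cancel hk] at this
  have hmono₁ : (n - 2).choose (k - 2) ≤ (n - 1).choose (k - 2) :=
    Nat.choose_le_choose _ (by omega)
  have hmono₂ : (2 * k - 1).choose k ≤ (n - 1).choose (k - 1) := by
    rw [Nat.choose_symm_of_eq_add (show 2 * k - 1 = k + (k - 1) by omega)]
    exact Nat.choose_le_choose _ (by omega)
  rw [show n + 1 - 2 = n - 1 by omega, Nat.add_sub_cancel, hpascal]
  nlinarith [Nat.mul_le_mul_left k hmono₁, Nat.mul_le_mul_left k hmono₂]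

theorem mul_choose_two_mul_sub_one_lt_two_mul_add_one {k : ℕ} (hk : 3 ≤ k) :
    (2 * k + 1) * (2 * k - 1).choose k <
      k * ((2 * k + 1 - 2).choose (k - 2) + (2 * k + 1 - 1).choose k) := by
  obtain ⟨a, rfl⟩ : ∃ a, k = a + 3 := ⟨k - 3, by omega⟩
  rw [show 2 * (a + 3) - 1 = 2 * a + 5 by omega, show 2 * (a + 3) + 1 - 2 = 2 * a + 5 by omega,
    show 2 * (a + 3) + 1 - 1 = 2 * a + 6 by omega, show a + 3 - 2 = a + 1 by omega]
  have hsymm : (2 * a + 5).choose (a + 2) = (2 * a + 5).choose (a + 3) :=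
    Nat.choose_symm_of_eq_add (by omega)
  have hpascal : (2 * a + 6).choose (a + 3) =
      (2 * a + 5).choose (a + 2) + (2 * a + 5).choose (a + 3) :=
    Nat.choose_succ_succ' (2 * a + 5) (a + 2)
  have hratio := Nat.choose_succ_right_eq (2 * a + 5) (a + 1)
  rw [show 2 * a + 5 - (a + 1) = a + 4 by omega, hsymm] at hratio
  have hpos : 0 < (2 * a + 5).choose (a + 3) := Nat.choose_pos (by omega)
  rw [hpascal, hsymm]
  nlinarith

theorem mul_choose_two_mul_sub_one_lt {k n : ℕ} (hk : 2 ≤ k) (hn : 2 * k < n)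
    (hkn : ¬(k = 2 ∧ n = 5)) :
    n * (2 * k - 1).choose k < k * ((n - 2).choose (k - 2) + (n - 1).choose k) := by
  rcases (show k = 2 ∨ 3 ≤ k by omega) with rfl | hk
  · induction n, (show 6 ≤ n by omega) using Nat.le_induction with
    | base => decide
    | succ n hn ih =>
      exact mul_choose_two_mul_sub_one_lt_succ (by norm_num) (by omega) (ih (by omega) (by omega))
  · induction n, (show 2 * k + 1 ≤ n by omega) using Nat.le_induction with
    | base => exact mul_choose_two_mul_sub_one_lt_two_mul_add_one hk
    | succ n hn ih =>
      exact mul_choose_two_mul_sub_one_lt_succ (by omega) (by omega) (ih (by omega) (by omega))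

end Arithmetic

theorem card_filter_two_le_card_inter_le_two {Z : Fin 5 → Finset (Fin 5)}
    (hZ : ∀ j, #(Z j) = 3) (hR : ∀ i, #{j | i ∈ Z j} = 3) (j : Fin 5) :
    #{j' ∈ univ.erase j | 2 ≤ #(Z j ∩ Z j')} ≤ 2 := by
  have hsum : ∑ j' ∈ univ.erase j, #(Z j ∩ Z j') = 6 := by
    have := sum_card_bipartiteAbove_eq_sum_card_bipartiteBelow
      (s := univ.erase j) (t := Z j) (r := fun j' i => i ∈ Z j')
    simp only [bipartiteAbove, bipartiteBelow, filter_mem_eq_inter] at this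
    rw [this, sum_congr rfl (g := fun _ => 2), sum_const, hZ, smul_eq_mul]
    intro i hi
    rw [filter_erase, card_erase_of_mem (mem_filter.2 ⟨mem_univ j, hi⟩), hR]
  have hpos : ∀ j', 1 ≤ #(Z j ∩ Z j') := fun j' => by
    have hunion := card_union_add_card_inter (Z j) (Z j')
    have hle : #(Z j ∪ Z j') ≤ 5 := by simpa using card_le_univ (Z j ∪ Z j')
    rw [hZ, hZ] at hunion
    omega
  have hsplit : ∑ j' ∈ univ.erase j, (#(Z j ∩ Z j') - 1) + 4 = 6 := by
    rw [← hsum, show 4 = #(univ.erase j) by simp, card_eq_sum_ones, ← sum_add_distrib]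
    exact sum_congr rfl fun j' _ => Nat.sub_add_cancel (hpos j')
  calc #{j' ∈ univ.erase j | 2 ≤ #(Z j ∩ Z j')}
      = ∑ j' ∈ univ.erase j, if 2 ≤ #(Z j ∩ Z j') then 1 else 0 := card_filter _ _
    _ ≤ ∑ j' ∈ univ.erase j, (#(Z j ∩ Z j') - 1) :=
      sum_le_sum fun j' _ => by split_ifs <;> omega
    _ = 2 := by omega

section Configuration

variable {K W : Type*} [DivisionRing K] [AddCommGroup W] [Module K W] {n k : ℕ}
  {x : Fin n → W} {y : Fin n → W →ₗ[K] K}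

open Classical in
noncomputable def jointIndexSets (K : Type*) {W : Type*} [DivisionRing K] [AddCommGroup W]
    [Module K W] (k : ℕ) (x : Fin n → W) (y : Fin n → W →ₗ[K] K) :
    Finset (Finset (Fin n)) :=
  {B ∈ powersetCard k univ | (⨅ j ∈ B, LinearMap.ker (y j) : Submodule K W) ∈ JkSet K k x}

theorem mem_jointIndexSets {B : Finset (Fin n)} :
    B ∈ jointIndexSets K k x y ↔
      #B = k ∧ (⨅ j ∈ B, LinearMap.ker (y j) : Submodule K W) ∈ JkSet K k x := by
  simp [jointIndexSets]

theorem ncard_inter_le_card_jointIndexSets :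
    (JkSet K k x ∩ JStarSet K k y).ncard ≤ #(jointIndexSets K k x y) := by
  classical
  calc (JkSet K k x ∩ JStarSet K k y).ncard
      ≤ #((jointIndexSets K k x y).image
          fun B => (⨅ j ∈ B, LinearMap.ker (y j) : Submodule K W)) := by
        rw [← Set.ncard_coe_finset]
        refine Set.ncard_le_ncard ?_ (Finset.finite_toSet _)
        rintro _ ⟨hPx, B, hB, rfl⟩
        exact mem_coe.2 (mem_image_of_mem _ (mem_jointIndexSets.2 ⟨hB, hPx⟩))
    _ ≤ #(jointIndexSets K k x y) := card_image_le

theorem indicesIn_iInf_ker_subset {B : Finset (Fin n)} {j : Fin n} (hj : j ∈ B) :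
    indicesIn x (⨅ j ∈ B, LinearMap.ker (y j) : Submodule K W) ⊆
      indicesIn x (LinearMap.ker (y j)) :=
  indicesIn_mono (biInf_le _ hj)

variable [FiniteDimensional K W]

theorem card_indicesIn_ker (hk : 0 < k) (hn : 2 * k ≤ n) (hW : finrank K W = 2 * k)
    (hx : MIndep K (2 * k) x) (hy : MIndep Kᵐᵒᵖ (2 * k) y) {j : Fin n}
    (hker : ∃ A : Finset (Fin n), LinearMap.ker (y j) = span K (x '' A)) :
    #(indicesIn x (LinearMap.ker (y j))) = 2 * k - 1 := by
  obtain ⟨A, hA⟩ := hker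
  have hdim := hy.finrank_iInf_ker_add_card hn (S := {j}) (by simp; omega)
  rw [Finset.iInf_singleton, Finset.card_singleton, hA, hW] at hdim
  have hlt : finrank K (span K (x '' A)) < 2 * k := by omega
  rw [hA, hx.indicesIn_span hn hlt, hx.card_eq_finrank_span hn hlt]
  omega

theorem card_indicesIn_iInf_ker_eq_and_span_eq (hk : 0 < k) (hn : 2 * k ≤ n)
    (hW : finrank K W = 2 * k) (hx : MIndep K (2 * k) x) (hy : MIndep Kᵐᵒᵖ (2 * k) y)
    {B : Finset (Fin n)} (hB : B ∈ jointIndexSets K k x y) :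
    #(indicesIn x (⨅ j ∈ B, LinearMap.ker (y j) : Submodule K W)) = k ∧
      span K (x '' indicesIn x (⨅ j ∈ B, LinearMap.ker (y j) : Submodule K W)) =
        ⨅ j ∈ B, LinearMap.ker (y j) := by
  obtain ⟨hBk, A, hAk, hBA⟩ := mem_jointIndexSets.1 hB
  have hdim := hy.finrank_iInf_ker_add_card hn (S := B) (by omega)
  have hlt : finrank K (span K (x '' A)) < 2 * k := by rw [← hBA]; omega
  rw [hBA, hx.indicesIn_span hn hlt]
  exact ⟨hAk, rfl⟩

theorem injOn_indicesIn_iInf_ker (hk : 0 < k) (hn : 2 * k ≤ n) (hW : finrank K W = 2 * k)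
    (hx : MIndep K (2 * k) x) (hy : MIndep Kᵐᵒᵖ (2 * k) y) :
    Set.InjOn (fun B => indicesIn x (⨅ j ∈ B, LinearMap.ker (y j) : Submodule K W))
      (jointIndexSets K k x y : Set (Finset (Fin n))) := by
  intro B hB B' hB' h
  have hBk := (mem_jointIndexSets.1 hB).1
  have hB'k := (mem_jointIndexSets.1 hB').1
  refine hy.eq_of_iInf_ker_eq hn (hBk.trans hB'k.symm) (by omega) ?_
  rw [← (card_indicesIn_iInf_ker_eq_and_span_eq hk hn hW hx hy hB).2,
    ← (card_indicesIn_iInf_ker_eq_and_span_eq hk hn hW hx hy hB').2]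
  exact congrArg (fun A : Finset (Fin n) => span K (x '' A)) h

theorem card_filter_mem_jointIndexSets_le_choose (hk : 0 < k) (hn : 2 * k ≤ n)
    (hW : finrank K W = 2 * k) (hx : MIndep K (2 * k) x) (hy : MIndep Kᵐᵒᵖ (2 * k) y)
    (hker : ∀ j, ∃ A : Finset (Fin n), LinearMap.ker (y j) = span K (x '' A)) (j : Fin n) :
    #{B ∈ jointIndexSets K k x y | j ∈ B} ≤ (2 * k - 1).choose k := by
  rw [← card_indicesIn_ker hk hn hW hx hy (hker j), ← card_powersetCard]
  refine card_le_card_of_injOn _ (fun B hB => ?_)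
    ((injOn_indicesIn_iInf_ker hk hn hW hx hy).mono (filter_subset _ _))
  obtain ⟨hB, hjB⟩ := mem_filter.1 hB
  exact mem_powersetCard.2 ⟨indicesIn_iInf_ker_subset hjB,
    (card_indicesIn_iInf_ker_eq_and_span_eq hk hn hW hx hy hB).1⟩

open Classical in
theorem card_filter_mem_ker (hk : 0 < k) (hn : 2 * k ≤ n) (hW : finrank K W = 2 * k)
    (hx : MIndep K (2 * k) x) (hy : MIndep Kᵐᵒᵖ (2 * k) y) {i : Fin n}
    (hline : ∃ T : Finset (Fin n), span K {x i} = ⨅ j ∈ T, LinearMap.ker (y j)) :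
    #{j | x i ∈ LinearMap.ker (y j)} = 2 * k - 1 := by
  set R : Finset (Fin n) := {j | x i ∈ LinearMap.ker (y j)}
  have hxi := hx.ne_zero (by omega) hn i
  have hlt : #R < 2 * k :=
    hy.card_lt_of_forall_apply_eq_zero hn hW hxi fun j hj => (mem_filter.1 hj).2
  obtain ⟨T, hT⟩ := hline
  have hTR : T ⊆ R := by
    have hxT : x i ∈ (⨅ j ∈ T, LinearMap.ker (y j) : Submodule K W) :=
      hT ▸ mem_span_singleton_self _
    simp only [Submodule.mem_iInf] at hxT
    exact fun j hj => mem_filter.2 ⟨mem_univ j, hxT j hj⟩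
  have hdim := hy.finrank_iInf_ker_add_card hn ((Finset.card_le_card hTR).trans hlt.le)
  rw [← hT, finrank_span_singleton hxi] at hdim
  have := Finset.card_le_card hTR
  omega

theorem card_filter_mem_jointIndexSets_le_two {x : Fin 5 → W} {y : Fin 5 → W →ₗ[K] K}
    (hW : finrank K W = 2 * 2)
    (hx : MIndep K (2 * 2) x) (hy : MIndep Kᵐᵒᵖ (2 * 2) y)
    (hker : ∀ j, ∃ A : Finset (Fin 5), LinearMap.ker (y j) = span K (x '' A))
    (hline : ∀ i, ∃ T : Finset (Fin 5), span K {x i} = ⨅ j ∈ T, LinearMap.ker (y j))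
    (j : Fin 5) : #{B ∈ jointIndexSets K 2 x y | j ∈ B} ≤ 2 := by
  set Z : Fin 5 → Finset (Fin 5) := fun j => indicesIn x (LinearMap.ker (y j))
  have hZ : ∀ j, #(Z j) = 3 := fun j =>
    card_indicesIn_ker (by norm_num) (by norm_num) hW hx hy (hker j)
  have hR : ∀ i, #{j | i ∈ Z j} = 3 := fun i => by
    convert card_filter_mem_ker (by norm_num) (by norm_num) hW hx hy (hline i) using 2
    ext
    simp [Z]
  have hsub : {B ∈ jointIndexSets K 2 x y | j ∈ B} ⊆
      {j' ∈ univ.erase j | 2 ≤ #(Z j ∩ Z j')}.image fun j' => {j, j'} := by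
    intro B hB
    obtain ⟨hB, hjB⟩ := mem_filter.1 hB
    obtain ⟨j', hj'⟩ := card_eq_one.1 <| by
      rw [card_erase_of_mem hjB, (mem_jointIndexSets.1 hB).1]
    have hj'B : j' ∈ B := mem_of_mem_erase (hj' ▸ mem_singleton_self j')
    refine mem_image.2 ⟨j', mem_filter.2 ⟨mem_erase.2 ⟨?_, mem_univ _⟩, ?_⟩, ?_⟩
    · exact ne_of_mem_erase (hj' ▸ mem_singleton_self j')
    · rw [← (card_indicesIn_iInf_ker_eq_and_span_eq (by norm_num) (by norm_num) hW hx hy hB).1]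
      exact Finset.card_le_card (subset_inter (indicesIn_iInf_ker_subset hjB)
        (indicesIn_iInf_ker_subset hj'B))
    · rw [← insert_erase hjB, hj']
  exact (Finset.card_le_card hsub).trans
    (card_image_le.trans (card_filter_two_le_card_inter_le_two hZ hR j))

end Configuration

theorem card_inter_lt_general
    {K W : Type*} [DivisionRing K] [AddCommGroup W] [Module K W]
    [FiniteDimensional K W] (n k : ℕ) (hk : 2 ≤ k) (hn : 2 * k < n)
    (hW : Module.finrank K W = 2 * k)
    (x : Fin n → W) (hx : MIndep K (2 * k) x)
    (y : Fin n → (W →ₗ[K] K))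
    (hy : MIndep Kᵐᵒᵖ (2 * k) y)
    (hker : ∀ i, ∃ A : Finset (Fin n),
      LinearMap.ker (y i) = Submodule.span K (x '' ↑A))
    (hline : ∀ i, ∃ T : Finset (Fin n),
      Submodule.span K {x i} = ⨅ j ∈ T, LinearMap.ker (y j)) :
    (JkSet K k x ∩ JStarSet K k y).ncard <
      Nat.choose (n - 2) (k - 2) + Nat.choose (n - 1) k := by
  refine ncard_inter_le_card_jointIndexSets.trans_lt ?_
  set 𝓑 := jointIndexSets K k x y
  have hcount : ∀ d, (∀ j, #{B ∈ 𝓑 | j ∈ B} ≤ d) → #𝓑 * k ≤ n * d := by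
    intro d hd
    rw [← sum_const_nat fun B hB => (mem_jointIndexSets.1 hB).1]
    simpa using sum_card_le hd
  by_cases hkn : k = 2 ∧ n = 5
  · obtain ⟨rfl, rfl⟩ := hkn
    have := hcount 2 (card_filter_mem_jointIndexSets_le_two hW hx hy hker hline)
    simp only [Nat.choose]
    omega
  · have := hcount _ (card_filter_mem_jointIndexSets_le_choose (by omega) hn.le hW hx hy hker)
    have hbound := mul_choose_two_mul_sub_one_lt hk hn hkn
    rw [mul_comm k] at hbound
    exact Nat.lt_of_mul_lt_mul_right (this.trans_lt hbound)

/-- Let `W` be `2k`-dimensional, `x` a `(2k)`-independent family of `n`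
vectors of `W` and `y` a `(2k)`-independent family of `n` functionals with kernels `U_i`,
such that every `U_i` is spanned by a subset of `X` and every line `⟨x i⟩` is the
intersection of some of the `U_j`. Then `|J_k(X) ∩ J*_k(Y)| < a(n,k) = C(n-2,k-2) + C(n-1,k)`. -/
theorem card_inter_lt
    {K W : Type*} [DivisionRing K] [AddCommGroup W] [Module K W]
    [FiniteDimensional K W] (n k : ℕ) (hk : 2 ≤ k) (hn : 2 * k < n)
    (hW : Module.finrank K W = 2 * k)
    (x : Fin n → W) (hxinj : Function.Injective x) (hx : MIndep K (2 * k) x)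
    (y : Fin n → (W →ₗ[K] K)) (hyinj : Function.Injective y)
    (hy : MIndep Kᵐᵒᵖ (2 * k) y)
    (hker : ∀ i, ∃ A : Finset (Fin n),
      LinearMap.ker (y i) = Submodule.span K (x '' ↑A))
    (hline : ∀ i, ∃ T : Finset (Fin n),
      Submodule.span K {x i} = ⨅ j ∈ T, LinearMap.ker (y j)) :
    (JkSet K k x ∩ JStarSet K k y).ncard <
      Nat.choose (n - 2) (k - 2) + Nat.choose (n - 1) k :=
  card_inter_lt_general n k hk hn hW x hx y hy hker hline
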